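/- arXiv:2108.01479 — 7 statements merged into one kernel-verified Lean document; each statement's English description precedes it below -/
import Mathlib

section
/- Let X be a nonnegative real-valued random variable on a probability space (Ω, 𝓕, ℙ) with finite expectation E(X). Let 0 < λ₁ < λ₂ < ⋯ < λₙ < ∞ with λ_{n+1} = ∞, and let a₁, a₂, …, aₙ be real numbers with max_{1 ≤ k ≤ n} aₖ > 0. Let v ∈ {1,…,n} be an index at which max_{1 ≤ k ≤ n} (aₖ/λₖ) is attained, i.e. aₖ/λₖ ≤ a_v/λ_v for all k. Then Σ_{i=1}^{n} aᵢ·ℙ(λᵢ ≤ X < λ_{i+1}) ≤ E(X)·a_v/λ_v, where ℙ(λₙ ≤ X < λ_{n+1}) means ℙ(X ≥ λₙ). -/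
/-!
With `c = a_v / λ_v`, which is `≥ 0` because some `a_k > 0`, the maximality of `v` gives
`a_i ≤ c λ_i`. The layers `{λ_i ≤ X < λ_{i+1}}` are disjoint and `X ≥ λ_i` on the `i`-th one, so
Markov's inequality on each layer, summed, gives `Σ λ_i ℙ(layer i) ≤ E(X)`.
-/

open MeasureTheory Finset

namespace MeasureTheory

variable {Ω ι : Type*} [MeasurableSpace Ω] {μ : Measure Ω} {X : Ω → ℝ}

theorem sum_mul_measureReal_le_integral_of_pairwiseDisjoint [IsFiniteMeasure μ]
    (hXnn : 0 ≤ᵐ[μ] X) (hXint : Integrable X μ) {s : Finset ι} {S : ι → Set Ω} {c : ι → ℝ}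
    (hS : ∀ i ∈ s, MeasurableSet (S i)) (hdisj : Set.PairwiseDisjoint (↑s) S)
    (hc : ∀ i ∈ s, ∀ ω ∈ S i, c i ≤ X ω) :
    ∑ i ∈ s, c i * μ.real (S i) ≤ ∫ ω, X ω ∂μ :=
  calc ∑ i ∈ s, c i * μ.real (S i)
      ≤ ∑ i ∈ s, ∫ ω in S i, X ω ∂μ := sum_le_sum fun i hi =>
        setIntegral_ge_of_const_le_real (hS i hi) (measure_ne_top μ _) (hc i hi)
          hXint.integrableOn
    _ = ∫ ω in ⋃ i ∈ s, S i, X ω ∂μ :=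
        (integral_biUnion_finset s hS hdisj fun _ _ => hXint.integrableOn).symm
    _ ≤ ∫ ω, X ω ∂μ := setIntegral_le_integral hXint hXnn

end MeasureTheory

def thresholdLayer {Ω : Type*} (X : Ω → ℝ) (l : ℕ → ℝ) (n i : ℕ) : Set Ω :=
  if i < n then X ⁻¹' Set.Ico (l i) (l (i + 1)) else X ⁻¹' Set.Ici (l i)

section thresholdLayer

variable {Ω : Type*} {X : Ω → ℝ} {l : ℕ → ℝ} {n i : ℕ} {ω : Ω}

theorem measurableSet_thresholdLayer [MeasurableSpace Ω] (hX : Measurable X) (i : ℕ) :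
    MeasurableSet (thresholdLayer X l n i) := by
  unfold thresholdLayer
  split_ifs
  exacts [hX measurableSet_Ico, hX measurableSet_Ici]

theorem le_of_mem_thresholdLayer (h : ω ∈ thresholdLayer X l n i) : l i ≤ X ω := by
  unfold thresholdLayer at h
  split_ifs at h
  exacts [h.1, h]

theorem lt_of_mem_thresholdLayer (hi : i < n) (h : ω ∈ thresholdLayer X l n i) :
    X ω < l (i + 1) := by
  rw [thresholdLayer, if_pos hi] at h
  exact h.2

theorem pairwiseDisjoint_thresholdLayer (hl : MonotoneOn l (Set.Icc 1 n)) :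
    Set.PairwiseDisjoint (↑(Icc 1 n)) (thresholdLayer X l n) := by
  have below : ∀ i ∈ Icc 1 n, ∀ j ∈ Icc 1 n, i < j →
      Disjoint (thresholdLayer X l n i) (thresholdLayer X l n j) := by
    intro i hi j hj hij
    rw [mem_Icc] at hi hj
    have hl_le : l (i + 1) ≤ l j := hl ⟨by omega, by omega⟩ hj hij
    exact Set.disjoint_left.mpr fun ω hωi hωj =>
      (lt_of_mem_thresholdLayer (by omega) hωi).not_ge (hl_le.trans (le_of_mem_thresholdLayer hωj))
  intro i hi j hj hne
  rcases lt_or_gt_of_ne hne with h | h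
  · exact below i hi j hj h
  · exact (below j hj i hi h).symm

theorem sum_Icc_thresholdLayer {M : Type*} [AddCommMonoid M] (hn : 1 ≤ n) (g : ℕ → Set Ω → M) :
    ∑ i ∈ Icc 1 n, g i (thresholdLayer X l n i) =
      ∑ i ∈ Ico 1 n, g i {ω | l i ≤ X ω ∧ X ω < l (i + 1)} + g n {ω | l n ≤ X ω} := by
  rw [← Ico_add_one_right_eq_Icc, sum_Ico_succ_top hn, thresholdLayer, if_neg (lt_irrefl n)]
  congr 1
  refine sum_congr rfl fun i hi => ?_
  rw [thresholdLayer, if_pos (mem_Ico.mp hi).2]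
  rfl

end thresholdLayer

theorem eisenberg_ghosh_general
    {Ω : Type*} [MeasurableSpace Ω] (ℙ : Measure Ω) [IsProbabilityMeasure ℙ]
    {X : Ω → ℝ} (hX : Measurable X) (hXnn : ∀ᵐ ω ∂ℙ, 0 ≤ X ω)
    (hXint : Integrable X ℙ)
    {n : ℕ} {l : ℕ → ℝ}
    (hl1 : 0 < l 1)
    (hlmono : ∀ k, 1 ≤ k → k < n → l k < l (k + 1))
    {a : ℕ → ℝ} (hapos : ∃ k ∈ Finset.Icc 1 n, 0 < a k)
    {v : ℕ} (hv : v ∈ Finset.Icc 1 n)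
    (hmax : ∀ k ∈ Finset.Icc 1 n, a k / l k ≤ a v / l v) :
    (∑ i ∈ Finset.Ico 1 n,
        a i * (ℙ {ω | l i ≤ X ω ∧ X ω < l (i + 1)}).toReal) +
      a n * (ℙ {ω | l n ≤ X ω}).toReal ≤
    (∫ ω, X ω ∂ℙ) * a v / l v := by
  obtain ⟨hv1, hvn⟩ := mem_Icc.mp hv
  have hl : StrictMonoOn l (Set.Icc 1 n) :=
    strictMonoOn_of_lt_succ Set.ordConnected_Icc fun k _ hk hk' => by
      rw [Order.succ_eq_add_one] at hk' ⊢
      exact hlmono k hk.1 (Nat.lt_of_succ_le hk'.2)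
  have hl_pos : ∀ k ∈ Icc 1 n, 0 < l k := fun k hk =>
    hl1.trans_le (hl.monotoneOn ⟨le_rfl, hv1.trans hvn⟩ (mem_Icc.mp hk) (mem_Icc.mp hk).1)
  set c := a v / l v
  have hc : 0 ≤ c := by
    obtain ⟨k, hk, hak⟩ := hapos
    exact (div_pos hak (hl_pos k hk)).le.trans (hmax k hk)
  have ha : ∀ k ∈ Icc 1 n, a k ≤ c * l k := fun k hk =>
    (div_le_iff₀ (hl_pos k hk)).mp (hmax k hk)
  calc _ = ∑ i ∈ Icc 1 n, a i * ℙ.real (thresholdLayer X l n i) :=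
        (sum_Icc_thresholdLayer (hv1.trans hvn) fun i s => a i * (ℙ s).toReal).symm
    _ ≤ ∑ i ∈ Icc 1 n, c * (l i * ℙ.real (thresholdLayer X l n i)) :=
        sum_le_sum fun i hi => by
          rw [← mul_assoc]
          exact mul_le_mul_of_nonneg_right (ha i hi) measureReal_nonneg
    _ ≤ c * ∫ ω, X ω ∂ℙ := by
        rw [← mul_sum]
        exact mul_le_mul_of_nonneg_left (sum_mul_measureReal_le_integral_of_pairwiseDisjoint hXnn
          hXint (fun i _ => measurableSet_thresholdLayer hX i)
          (pairwiseDisjoint_thresholdLayer hl.monotoneOn) fun i _ _ => le_of_mem_thresholdLayer) hc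
    _ = (∫ ω, X ω ∂ℙ) * a v / l v := by ring

/-- **Eisenberg–Ghosh inequality.** For a nonnegative integrable random
variable `X`, reals `0 < λ₁ < ⋯ < λₙ` (with `λ_{n+1} = ∞`), and reals
`a₁, …, aₙ` with `max aₖ > 0` and `aₖ/λₖ ≤ a_v/λ_v` for all `k`, we have
`Σ_{i=1}^n aᵢ·ℙ(λᵢ ≤ X < λ_{i+1}) ≤ E(X)·a_v/λ_v`, where the last term of the
sum is `aₙ·ℙ(X ≥ λₙ)`. -/
theorem eisenberg_ghosh
    {Ω : Type*} [MeasurableSpace Ω] (ℙ : Measure Ω) [IsProbabilityMeasure ℙ]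
    {X : Ω → ℝ} (hX : Measurable X) (hXnn : ∀ᵐ ω ∂ℙ, 0 ≤ X ω)
    (hXint : Integrable X ℙ)
    {n : ℕ} (hn : 1 ≤ n) {l : ℕ → ℝ}
    (hl1 : 0 < l 1)
    (hlmono : ∀ k, 1 ≤ k → k < n → l k < l (k + 1))
    {a : ℕ → ℝ} (hapos : ∃ k ∈ Finset.Icc 1 n, 0 < a k)
    {v : ℕ} (hv : v ∈ Finset.Icc 1 n)
    (hmax : ∀ k ∈ Finset.Icc 1 n, a k / l k ≤ a v / l v) :
    (∑ i ∈ Finset.Ico 1 n,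
        a i * (ℙ {ω | l i ≤ X ω ∧ X ω < l (i + 1)}).toReal) +
      a n * (ℙ {ω | l n ≤ X ω}).toReal ≤
    (∫ ω, X ω ∂ℙ) * a v / l v :=
  eisenberg_ghosh_general ℙ hX hXnn hXint hl1 hlmono hapos hv hmax
end

section
/- Let X be a real-valued random variable on a probability space (Ω, 𝓕, ℙ) with finite expected value E(X) and finite variance σ². Let 0 < λ₁ < λ₂ < ⋯ < λₙ < ∞ and t ≥ 0. Then ℙ(X − E(X) ≥ λ₁) + Σ_{k=2}^{n} [((λₖ + t)² − (λₖ₋₁ + t)²)/(λ₁ + t)²]·ℙ(X − E(X) ≥ λₖ) ≤ (σ² + t²)/(t + λ₁)². -/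
open MeasureTheory Finset ProbabilityTheory

/-! With `Y = X − E(X)` and `f x = (x + t)²`, the left-hand side times `(λ₁ + t)²` is
`E[g(Y)]`, where `g z = f(λ₁)·1{λ₁ ≤ z} + Σₖ (f(λₖ) − f(λₖ₋₁))·1{λₖ ≤ z}`. The indicators that
fire form an initial segment `1, …, m`, so `g z` telescopes to `f(λₘ) ≤ f z`; hence
`E[g(Y)] ≤ E[(Y + t)²] = σ² + t²`. -/

theorem Finset.sum_Ioc_sub_pred {M : Type*} [AddCommGroup M] (g : ℕ → M) {a m : ℕ}
    (h : a ≤ m) : ∑ k ∈ Ioc a m, (g k - g (k - 1)) = g m - g a := by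
  induction m, h using Nat.le_induction with
  | base => simp
  | succ m hm ih => rw [sum_Ioc_succ_top hm, ih, Nat.add_sub_cancel, sub_add_sub_cancel']

theorem ite_add_sum_Icc_ite_sub_le {f : ℝ → ℝ} {l : ℕ → ℝ} {n : ℕ} (hf₀ : ∀ x, 0 ≤ f x)
    (hf : MonotoneOn f (Set.Ici (l 1))) (hl : MonotoneOn l (Set.Icc 1 n)) (z : ℝ) :
    (if l 1 ≤ z then f (l 1) else 0) +
      ∑ k ∈ Icc 2 n, (if l k ≤ z then f (l k) - f (l (k - 1)) else 0) ≤ f z := by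
  have base : (if l 1 ≤ z then f (l 1) else 0) ≤ f z := by
    split_ifs with h
    exacts [hf Set.self_mem_Ici h h, hf₀ z]
  induction n with
  | zero => simpa using base
  | succ n ih =>
    rcases Nat.eq_zero_or_pos n with rfl | hn
    · simpa using base
    by_cases hz : l (n + 1) ≤ z
    · have hle : ∀ k ∈ Icc 1 (n + 1), l k ≤ z := fun k hk =>
        (hl (mem_Icc.1 hk) ⟨by omega, le_rfl⟩ (mem_Icc.1 hk).2).trans hz
      have hl1 : l 1 ≤ l (n + 1) := hl ⟨le_rfl, by omega⟩ ⟨by omega, le_rfl⟩ (by omega)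
      rw [if_pos (hle 1 (by simp)),
        sum_congr rfl fun k hk => if_pos (hle k (Icc_subset_Icc_left one_le_two hk)),
        show Icc 2 (n + 1) = Ioc 1 (n + 1) from rfl, sum_Ioc_sub_pred (fun k => f (l k)) (by omega),
        add_sub_cancel]
      exact hf hl1 (hl1.trans hz) hz
    · rw [sum_Icc_succ_top (by omega), if_neg hz, add_zero]
      exact ih (hl.mono (Set.Icc_subset_Icc_right n.le_succ))

section Integral

variable {Ω : Type*} [MeasurableSpace Ω] {μ : Measure Ω}

theorem integral_sub_const_sq [IsProbabilityMeasure μ] {X : Ω → ℝ} (hX : MemLp X 2 μ) (c : ℝ) :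
    ∫ ω, (X ω - c) ^ 2 ∂μ = Var[X; μ] + (μ[X] - c) ^ 2 := by
  have hXc : MemLp (fun ω => X ω - c) 2 μ := hX.sub (memLp_const c)
  have hmean : ∫ ω, (X ω - c) ∂μ = μ[X] - c := by
    rw [integral_sub (hX.integrable one_le_two) (integrable_const c), integral_const]
    simp
  rw [← variance_sub_const hX.aestronglyMeasurable c, variance_eq_sub hXc, hmean]
  simp

theorem integral_indicator_const₀ {s : Set Ω} (hs : NullMeasurableSet s μ) (c : ℝ) :
    ∫ ω, s.indicator (fun _ => c) ω ∂μ = μ.real s * c := by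
  rw [integral_indicator₀ hs, setIntegral_const, smul_eq_mul]

theorem measureReal_mul_add_sum_le_integral [IsFiniteMeasure μ] {Y : Ω → ℝ}
    (hY : AEMeasurable Y μ) {f : ℝ → ℝ} {l : ℕ → ℝ} {n : ℕ} (hf₀ : ∀ x, 0 ≤ f x)
    (hf : MonotoneOn f (Set.Ici (l 1))) (hl : MonotoneOn l (Set.Icc 1 n))
    (hfY : Integrable (fun ω => f (Y ω)) μ) :
    μ.real {ω | l 1 ≤ Y ω} * f (l 1) +
      ∑ k ∈ Icc 2 n, μ.real {ω | l k ≤ Y ω} * (f (l k) - f (l (k - 1))) ≤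
    ∫ ω, f (Y ω) ∂μ := by
  set A : ℕ → Set Ω := fun k => {ω | l k ≤ Y ω}
  have hA : ∀ k, NullMeasurableSet (A k) μ := fun k => nullMeasurableSet_le aemeasurable_const hY
  have hint : ∀ k (c : ℝ), Integrable ((A k).indicator fun _ => c) μ := fun k _ =>
    (integrable_const _).indicator₀ (hA k)
  have hsum : Integrable (fun ω => ∑ k ∈ Icc 2 n,
      (A k).indicator (fun _ => f (l k) - f (l (k - 1))) ω) μ :=
    integrable_finsetSum _ fun k _ => hint _ _
  have hsplit : ∫ ω, ((A 1).indicator (fun _ => f (l 1)) ω + ∑ k ∈ Icc 2 n,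
      (A k).indicator (fun _ => f (l k) - f (l (k - 1))) ω) ∂μ =
      μ.real (A 1) * f (l 1) + ∑ k ∈ Icc 2 n, μ.real (A k) * (f (l k) - f (l (k - 1))) := by
    rw [integral_add (hint _ _) hsum, integral_finsetSum _ fun k _ => hint _ _]
    simp only [integral_indicator_const₀ (hA _)]
  rw [← hsplit]
  refine integral_mono ((hint _ _).add hsum) hfY fun ω => ?_
  simpa [A, Set.indicator_apply] using ite_add_sum_Icc_ite_sub_le hf₀ hf hl (Y ω)

end Integral

theorem generalized_cantelli_aux_general
    {Ω : Type*} [MeasurableSpace Ω] (P : Measure Ω) [IsProbabilityMeasure P]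
    {X : Ω → ℝ} (hX2 : MemLp X 2 P)
    {n : ℕ} {l : ℕ → ℝ}
    (hl1 : 0 < l 1)
    (hlmono : ∀ k, 1 ≤ k → k < n → l k < l (k + 1))
    {t : ℝ} (ht : 0 ≤ t) :
    (P {ω | l 1 ≤ X ω - ∫ x, X x ∂P}).toReal +
      ∑ k ∈ Finset.Icc 2 n,
        ((l k + t) ^ 2 - (l (k - 1) + t) ^ 2) / (l 1 + t) ^ 2 *
          (P {ω | l k ≤ X ω - ∫ x, X x ∂P}).toReal ≤
    (variance X P + t ^ 2) / (t + l 1) ^ 2 := by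
  have hl : MonotoneOn l (Set.Icc 1 n) := monotoneOn_of_le_add_one Set.ordConnected_Icc
    fun k _ hk hk1 => (hlmono k hk.1 hk1.2).le
  have hf : MonotoneOn (fun x => (x + t) ^ 2) (Set.Ici (l 1)) := fun x hx y _ hxy =>
    pow_le_pow_left₀ (by linarith [Set.mem_Ici.1 hx]) (by linarith) 2
  have hsq : Integrable (fun ω => (X ω - ∫ x, X x ∂P + t) ^ 2) P :=
    ((hX2.sub (memLp_const _)).add (memLp_const t)).integrable_sq
  have hlayer := measureReal_mul_add_sum_le_integral (hX2.aemeasurable.sub_const _)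
    (fun x => sq_nonneg (x + t)) hf hl hsq
  simp only [sub_add, integral_sub_const_sq hX2, sub_sub_cancel] at hlayer
  rw [add_comm t, le_div_iff₀ (by positivity), add_mul, sum_mul]
  refine le_of_eq ?_ |>.trans hlayer
  congr 1
  refine sum_congr rfl fun k _ => ?_
  field_simp
  rfl

/-- Intermediate inequality in the generalized Cantelli inequality: for a
random variable `X` with finite variance `σ²`, reals `0 < λ₁ < ⋯ < λₙ` and
`t ≥ 0`,
`P(X − E(X) ≥ λ₁) + Σ_{k=2}^n ((λₖ+t)² − (λₖ₋₁+t)²)/(λ₁+t)² · P(X − E(X) ≥ λₖ)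
  ≤ (σ² + t²)/(t + λ₁)²`. -/
theorem generalized_cantelli_aux
    {Ω : Type*} [MeasurableSpace Ω] (P : Measure Ω) [IsProbabilityMeasure P]
    {X : Ω → ℝ} (hX : Measurable X) (hX2 : MemLp X 2 P)
    {n : ℕ} (hn : 1 ≤ n) {l : ℕ → ℝ}
    (hl1 : 0 < l 1)
    (hlmono : ∀ k, 1 ≤ k → k < n → l k < l (k + 1))
    {t : ℝ} (ht : 0 ≤ t) :
    (P {ω | l 1 ≤ X ω - ∫ x, X x ∂P}).toReal +
      ∑ k ∈ Finset.Icc 2 n,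
        ((l k + t) ^ 2 - (l (k - 1) + t) ^ 2) / (l 1 + t) ^ 2 *
          (P {ω | l k ≤ X ω - ∫ x, X x ∂P}).toReal ≤
    (variance X P + t ^ 2) / (t + l 1) ^ 2 :=
  generalized_cantelli_aux_general P hX2 hl1 hlmono ht
end

section
/- Let X be a real-valued random variable on a probability space (Ω, 𝓕, ℙ) with finite expected value E(X) and finite nonzero variance σ². Let 0 < λ₁ < λ₂ < ⋯ < λₙ < ∞ and set λ₀ = −σ²/λ₁. Then Σ_{k=1}^{n} [((λ₁λₖ + σ²)² − (λ₁λₖ₋₁ + σ²)²)/(λ₁² + σ²)²]·ℙ(X − E(X) ≥ λₖ) ≤ σ²/(σ² + λ₁²). (Note that with λ₀ = −σ²/λ₁ the k = 1 term equals (λ₁² + σ²)²/(λ₁² + σ²)²·ℙ(X − E(X) ≥ λ₁) = ℙ(X − E(X) ≥ λ₁).) -/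
/-!
Write `Y = X - E X`, `a = λ₁` and `φ y = (a y + σ²)² / (a² + σ²)²`. The coefficients of the sum are
`φ λₖ - φ λₖ₋₁`, and `φ λ₀ = 0` by the choice of `λ₀`. So, for the largest `λ_K ≤ Y`, the sum
`∑ₖ (φ λₖ - φ λₖ₋₁) 1{λₖ ≤ Y}` telescopes to `φ λ_K ≤ φ Y`, since `φ` is increasing to the right
of `λ₁`. Taking expectations bounds the left side by `E φ(Y) = (a² σ² + σ⁴) / (a² + σ²)²`.
-/

open MeasureTheory Finset ProbabilityTheory

theorem Finset.sum_Icc_one_sub_pred {M : Type*} [AddCommGroup M] (f : ℕ → M) (n : ℕ) :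
    ∑ k ∈ Finset.Icc 1 n, (f k - f (k - 1)) = f n - f 0 := by
  induction n with
  | zero => simp
  | succ n ih =>
    rw [Finset.sum_Icc_succ_top (by omega), ih, Nat.add_sub_cancel]
    abel

theorem sum_sub_mul_indicator_Ici_le {α : Type*} [Preorder α] {φ : α → ℝ} {l : ℕ → α}
    {n : ℕ} {y : α} (hl : MonotoneOn l (Set.Icc 1 n)) (hφ : MonotoneOn φ (Set.Ici (l 1)))
    (hφl : 0 ≤ φ (l 0)) (hφy : 0 ≤ φ y) :
    ∑ k ∈ Finset.Icc 1 n, (φ (l k) - φ (l (k - 1))) * (Set.Ici (l k)).indicator 1 y ≤ φ y := by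
  induction n with
  | zero => simpa using hφy
  | succ n ih =>
    by_cases hy : l (n + 1) ≤ y
    · have hly : ∀ k ∈ Finset.Icc 1 (n + 1), l k ≤ y := fun k hk => by
        rw [Finset.mem_Icc] at hk
        exact (hl hk ⟨by omega, le_rfl⟩ hk.2).trans hy
      have hl1 : l 1 ≤ l (n + 1) := hl ⟨le_rfl, by omega⟩ ⟨by omega, le_rfl⟩ (by omega)
      calc ∑ k ∈ Finset.Icc 1 (n + 1), (φ (l k) - φ (l (k - 1))) * (Set.Ici (l k)).indicator 1 y
          = φ (l (n + 1)) - φ (l 0) := by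
            rw [← Finset.sum_Icc_one_sub_pred (fun k => φ (l k))]
            refine Finset.sum_congr rfl fun k hk => ?_
            simp [Set.indicator_of_mem (show y ∈ Set.Ici (l k) from hly k hk)]
        _ ≤ φ y := by
            have := hφ hl1 (hl1.trans hy) hy
            linarith
    · rw [Finset.sum_Icc_succ_top (by omega),
        Set.indicator_of_notMem (show y ∉ Set.Ici (l (n + 1)) from hy), mul_zero, add_zero]
      exact ih (hl.mono (Set.Icc_subset_Icc_right (by omega)))

section

variable {Ω : Type*} [MeasurableSpace Ω] {μ : Measure Ω}

theorem sum_mul_measureReal_le_integral {ι : Type*} [IsFiniteMeasure μ]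
    {t : Finset ι} {c : ι → ℝ} {s : ι → Set Ω} {f : Ω → ℝ}
    (hs : ∀ i ∈ t, NullMeasurableSet (s i) μ) (hf : Integrable f μ)
    (h : ∀ᵐ ω ∂μ, ∑ i ∈ t, c i * (s i).indicator 1 ω ≤ f ω) :
    ∑ i ∈ t, c i * μ.real (s i) ≤ ∫ ω, f ω ∂μ := by
  have hint : ∀ i ∈ t, Integrable (fun ω => c i * (s i).indicator (1 : Ω → ℝ) ω) μ :=
    fun i hi => ((integrable_const 1).indicator₀ (hs i hi)).const_mul _
  calc ∑ i ∈ t, c i * μ.real (s i)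
      = ∫ ω, ∑ i ∈ t, c i * (s i).indicator 1 ω ∂μ := by
        rw [integral_finsetSum _ hint]
        refine Finset.sum_congr rfl fun i hi => ?_
        rw [integral_const_mul, integral_indicator₀ (hs i hi)]
        simp
    _ ≤ ∫ ω, f ω ∂μ := integral_mono_ae (integrable_finsetSum _ hint) hf h

theorem integral_mul_sub_integral_add_sq [IsProbabilityMeasure μ] {X : Ω → ℝ}
    (hX : MemLp X 2 μ) (a b : ℝ) :
    ∫ ω, (a * (X ω - ∫ x, X x ∂μ) + b) ^ 2 ∂μ = a ^ 2 * variance X μ + b ^ 2 := by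
  set m := ∫ x, X x ∂μ
  have hXm : MemLp (fun ω => X ω - m) 2 μ := hX.sub (memLp_const m)
  have hZ : MemLp (fun ω => a * (X ω - m) + b) 2 μ := (hXm.const_mul a).add (memLp_const b)
  have hmean : ∫ ω, (a * (X ω - m) + b) ∂μ = b := by
    rw [integral_add ((hXm.integrable one_le_two).const_mul a) (integrable_const b),
      integral_const_mul, integral_sub (hX.integrable one_le_two) (integrable_const m)]
    simp [m]
  have hvar : variance (fun ω => a * (X ω - m) + b) μ = a ^ 2 * variance X μ := by
    rw [variance_add_const (hXm.const_mul a).aestronglyMeasurable, variance_const_mul,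
      variance_sub_const hX.aestronglyMeasurable]
  have := variance_eq_sub hZ
  simp only [Pi.pow_apply, hmean, hvar] at this
  linarith

end

theorem generalized_cantelli_general
    {Ω : Type*} [MeasurableSpace Ω] (P : Measure Ω) [IsProbabilityMeasure P]
    {X : Ω → ℝ} (hX2 : MemLp X 2 P)
    {n : ℕ} {l : ℕ → ℝ}
    (hl0 : l 0 = -(variance X P) / l 1)
    (hl1 : 0 < l 1)
    (hlmono : ∀ k, 1 ≤ k → k < n → l k < l (k + 1)) :
    ∑ k ∈ Finset.Icc 1 n,
        ((l 1 * l k + variance X P) ^ 2 -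
            (l 1 * l (k - 1) + variance X P) ^ 2) /
          (l 1 ^ 2 + variance X P) ^ 2 *
          (P {ω | l k ≤ X ω - ∫ x, X x ∂P}).toReal ≤
      variance X P / (variance X P + l 1 ^ 2) := by
  set v := variance X P
  set a := l 1
  set m := ∫ x, X x ∂P
  have hv : 0 ≤ v := variance_nonneg X P
  set φ : ℝ → ℝ := fun y => (a * y + v) ^ 2 / (a ^ 2 + v) ^ 2
  have hl : MonotoneOn l (Set.Icc 1 n) :=
    monotoneOn_of_le_succ Set.ordConnected_Icc fun k _ hk hk1 =>
      (hlmono k hk.1 (by simp only [Set.mem_Icc, Order.succ_eq_add_one] at hk1; omega)).le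
  have hφ : MonotoneOn φ (Set.Ici a) := fun x hx y _ hxy => by
    have : 0 ≤ a * x + v := by nlinarith [Set.mem_Ici.mp hx]
    dsimp only [φ]
    gcongr
  have hφ0 : φ (l 0) = 0 := by
    have : a * l 0 + v = 0 := by
      rw [hl0]
      field_simp
      ring
    simp [φ, this]
  have hY : AEMeasurable (fun ω => X ω - m) P := hX2.aemeasurable.sub_const m
  calc _ = ∑ k ∈ Finset.Icc 1 n, (φ (l k) - φ (l (k - 1))) * P.real {ω | l k ≤ X ω - m} := by
        simp only [φ, sub_div, measureReal_def]
    _ ≤ ∫ ω, φ (X ω - m) ∂P :=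
        sum_mul_measureReal_le_integral (fun k _ => nullMeasurableSet_le aemeasurable_const hY)
          (((hX2.sub (memLp_const m)).const_mul a).add (memLp_const v) |>.integrable_sq.div_const _)
          (ae_of_all _ fun ω => sum_sub_mul_indicator_Ici_le hl hφ hφ0.ge (by positivity))
    _ = (a ^ 2 * v + v ^ 2) / (a ^ 2 + v) ^ 2 := by
        rw [integral_div, integral_mul_sub_integral_add_sq hX2 a v]
    _ = v / (v + a ^ 2) := by
        have : 0 < a ^ 2 + v := by positivity
        field_simp
        ring

/-- **Generalization of Cantelli's inequality.**
For a random variable `X` with finite nonzero variance `σ²`, reals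
`0 < λ₁ < ⋯ < λₙ` and `λ₀ = −σ²/λ₁`,
`Σ_{k=1}^n ((λ₁λₖ + σ²)² − (λ₁λₖ₋₁ + σ²)²)/(λ₁² + σ²)² · P(X − E(X) ≥ λₖ)
  ≤ σ²/(σ² + λ₁²)`. -/
theorem generalized_cantelli
    {Ω : Type*} [MeasurableSpace Ω] (P : Measure Ω) [IsProbabilityMeasure P]
    {X : Ω → ℝ} (hX : Measurable X) (hX2 : MemLp X 2 P)
    (hvar : 0 < variance X P)
    {n : ℕ} (hn : 1 ≤ n) {l : ℕ → ℝ}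
    (hl0 : l 0 = -(variance X P) / l 1)
    (hl1 : 0 < l 1)
    (hlmono : ∀ k, 1 ≤ k → k < n → l k < l (k + 1)) :
    ∑ k ∈ Finset.Icc 1 n,
        ((l 1 * l k + variance X P) ^ 2 -
            (l 1 * l (k - 1) + variance X P) ^ 2) /
          (l 1 ^ 2 + variance X P) ^ 2 *
          (P {ω | l k ≤ X ω - ∫ x, X x ∂P}).toReal ≤
      variance X P / (variance X P + l 1 ^ 2) :=
  generalized_cantelli_general P hX2 hl0 hl1 hlmono
end

section
/- Let X₁, X₂, …, X_N be independent real-valued random variables on a probability space (Ω, 𝓕, ℙ) with aᵢ ≤ Xᵢ ≤ bᵢ almost surely for each i, where aᵢ < bᵢ, and let S_N = X₁ + X₂ + ⋯ + X_N. Let 0 < λ₁ < λ₂ < ⋯ < λₙ < ∞. Then for every s > 0, ℙ(S_N − E(S_N) ≥ λ₁) + Σ_{k=2}^{n} [e^{s(λₖ − λ₁)} − e^{s(λₖ₋₁ − λ₁)}]·ℙ(S_N − E(S_N) ≥ λₖ) ≤ e^{−sλ₁ + (s²/8)·Σ_{i=1}^{N}(bᵢ − aᵢ)²}. -/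
/-! With `T = S_N - E(S_N)` and `f x = exp (s (x - λ₁))`, the left-hand side is
`E[f λ₁ 1{λ₁ ≤ T} + Σₖ (f λₖ - f λₖ₋₁) 1{λₖ ≤ T}]`, and for monotone nonnegative `f` the
integrand is pointwise at most `f T` (its partial sums stay below `f (min T λₖ)`). Hence the
left-hand side is at most `exp (-s λ₁) E[exp (s T)]`, and by Hoeffding's lemma and independence
`T` is sub-Gaussian with variance proxy `Σᵢ (bᵢ - aᵢ)² / 4`. -/

open MeasureTheory Finset ProbabilityTheory
open scoped NNReal

section Layers

variable {f : ℝ → ℝ} {t : ℝ} (l : ℕ → ℝ)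

lemma layer_sum_le_min (hf : Monotone f) (ht : 0 ≤ f t) {n : ℕ} (hn : 1 ≤ n) :
    (if l 1 ≤ t then f (l 1) else 0) +
        ∑ k ∈ Icc 2 n, (if l k ≤ t then f (l k) - f (l (k - 1)) else 0) ≤
      f (min t (l n)) := by
  induction n, hn using Nat.le_induction with
  | base =>
    rcases le_or_gt (l 1) t with h | h
    · simp [h]
    · simpa [not_le.2 h, min_eq_left h.le] using ht
  | succ n hn ih =>
    rw [sum_Icc_succ_top (by omega), Nat.add_sub_cancel, ← add_assoc]
    rcases le_or_gt (l (n + 1)) t with h | h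
    · rw [if_pos h, min_eq_right h]
      linarith [hf (min_le_right t (l n))]
    · rw [if_neg (not_le.2 h), min_eq_left h.le]
      linarith [hf (min_le_left t (l n))]

lemma layer_sum_le (hf : Monotone f) (ht : 0 ≤ f t) (n : ℕ) :
    (if l 1 ≤ t then f (l 1) else 0) +
        ∑ k ∈ Icc 2 n, (if l k ≤ t then f (l k) - f (l (k - 1)) else 0) ≤ f t := by
  obtain rfl | hn := n.eq_zero_or_pos
  · simpa using (layer_sum_le_min l hf ht le_rfl).trans (hf (min_le_left _ _))
  · exact (layer_sum_le_min l hf ht hn).trans (hf (min_le_left _ _))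

end Layers

lemma layer_sum_measureReal_le_integral {Ω : Type*} [MeasurableSpace Ω] {μ : Measure Ω}
    [IsFiniteMeasure μ] {T : Ω → ℝ} (hT : Measurable T) {f : ℝ → ℝ} (hf : Monotone f)
    (hf0 : ∀ x, 0 ≤ f x) (hfT : Integrable (fun ω ↦ f (T ω)) μ) (l : ℕ → ℝ) (n : ℕ) :
    f (l 1) * μ.real {ω | l 1 ≤ T ω} +
        ∑ k ∈ Icc 2 n, (f (l k) - f (l (k - 1))) * μ.real {ω | l k ≤ T ω} ≤
      ∫ ω, f (T ω) ∂μ := by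
  have hA (k : ℕ) : MeasurableSet {ω | l k ≤ T ω} := measurableSet_le measurable_const hT
  have hind (c : ℝ) (k : ℕ) :
      (fun ω ↦ if l k ≤ T ω then c else 0) = {ω | l k ≤ T ω}.indicator (fun _ ↦ c) := by
    ext ω
    simp only [Set.indicator_apply, Set.mem_ofPred_eq]
  have hint (c : ℝ) (k : ℕ) : Integrable (fun ω ↦ if l k ≤ T ω then c else 0) μ := by
    rw [hind]
    exact (integrable_const c).indicator (hA k)
  have hmeas (c : ℝ) (k : ℕ) :
      c * μ.real {ω | l k ≤ T ω} = ∫ ω, (if l k ≤ T ω then c else 0) ∂μ := by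
    rw [hind, integral_indicator_const _ (hA k), smul_eq_mul, mul_comm]
  calc _ = ∫ ω, ((if l 1 ≤ T ω then f (l 1) else 0) +
          ∑ k ∈ Icc 2 n, (if l k ≤ T ω then f (l k) - f (l (k - 1)) else 0)) ∂μ := by
        rw [integral_add (hint _ _) (integrable_finsetSum _ fun k _ ↦ hint _ _),
          integral_finsetSum _ fun k _ ↦ hint _ _]
        simp only [hmeas]
    _ ≤ ∫ ω, f (T ω) ∂μ :=
        integral_mono ((hint _ _).add (integrable_finsetSum _ fun k _ ↦ hint _ _)) hfT
          fun ω ↦ layer_sum_le l hf (hf0 _) n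

lemma hasSubgaussianMGF_sum_sub_integral {Ω ι : Type*} [MeasurableSpace Ω] {μ : Measure Ω}
    [IsProbabilityMeasure μ] [Fintype ι] {X : ι → Ω → ℝ} (hX : ∀ i, AEMeasurable (X i) μ)
    (hindep : iIndepFun X μ) {a b : ι → ℝ} (hbdd : ∀ i, ∀ᵐ ω ∂μ, X i ω ∈ Set.Icc (a i) (b i)) :
    HasSubgaussianMGF (fun ω ↦ ∑ i, X i ω - ∫ x, ∑ i, X i x ∂μ)
      (∑ i, (‖b i - a i‖₊ / 2) ^ 2) μ := by
  have hcentered : iIndepFun (fun i ω ↦ X i ω - ∫ y, X i y ∂μ) μ :=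
    hindep.comp (fun i x ↦ x - ∫ y, X i y ∂μ) fun i ↦ measurable_id.sub_const _
  have hsum := HasSubgaussianMGF.sum_of_iIndepFun hcentered (s := univ) fun i _ ↦
    hasSubgaussianMGF_of_mem_Icc (hX i) (hbdd i)
  convert hsum using 2 with ω
  rw [integral_finsetSum _ fun i _ ↦ Integrable.of_mem_Icc _ _ (hX i) (hbdd i),
    sum_sub_distrib]

theorem generalized_hoeffding_aux_general
    {Ω : Type*} [MeasurableSpace Ω] (P : Measure Ω) [IsProbabilityMeasure P]
    {N : ℕ} {X : Fin N → Ω → ℝ} (hXmeas : ∀ i, Measurable (X i))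
    (hindep : iIndepFun X P)
    {a b : Fin N → ℝ}
    (hbdd : ∀ i, ∀ᵐ ω ∂P, X i ω ∈ Set.Icc (a i) (b i))
    {n : ℕ} {l : ℕ → ℝ}
    {s : ℝ} (hs : 0 < s) :
    (P {ω | l 1 ≤ (∑ i, X i ω) - ∫ x, (∑ i, X i x) ∂P}).toReal +
      ∑ k ∈ Finset.Icc 2 n,
        (Real.exp (s * (l k - l 1)) - Real.exp (s * (l (k - 1) - l 1))) *
          (P {ω | l k ≤ (∑ i, X i ω) - ∫ x, (∑ i, X i x) ∂P}).toReal ≤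
    Real.exp (-s * l 1 + s ^ 2 / 8 * ∑ i, (b i - a i) ^ 2) := by
  set T : Ω → ℝ := fun ω ↦ ∑ i, X i ω - ∫ x, ∑ i, X i x ∂P
  have hT : Measurable T := (measurable_sum univ fun i _ ↦ hXmeas i).sub_const _
  have hsubG := hasSubgaussianMGF_sum_sub_integral (fun i ↦ (hXmeas i).aemeasurable) hindep hbdd
  have hf : Monotone fun x ↦ Real.exp (s * (x - l 1)) := fun _ _ hxy ↦
    Real.exp_le_exp.2 (by gcongr)
  have hsplit (ω : Ω) :
      Real.exp (s * (T ω - l 1)) = Real.exp (-s * l 1) * Real.exp (s * T ω) := by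
    rw [← Real.exp_add]
    ring_nf
  have hfT : Integrable (fun ω ↦ Real.exp (s * (T ω - l 1))) P := by
    simpa only [hsplit] using (hsubG.integrable_exp_mul s).const_mul _
  have hlayers := layer_sum_measureReal_le_integral hT hf (fun _ ↦ (Real.exp_pos _).le) hfT l n
  simp only [sub_self, mul_zero, Real.exp_zero, one_mul] at hlayers
  calc _ ≤ ∫ ω, Real.exp (s * (T ω - l 1)) ∂P := hlayers
    _ = Real.exp (-s * l 1) * mgf T P s := by
        simp only [hsplit, integral_const_mul, mgf]
    _ ≤ Real.exp (-s * l 1) * Real.exp ((∑ i, (‖b i - a i‖₊ / 2) ^ 2 : ℝ≥0) * s ^ 2 / 2) := by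
        gcongr
        exact hsubG.mgf_le s
    _ = _ := by
        rw [← Real.exp_add]
        push_cast
        simp only [Real.norm_eq_abs, div_pow, sq_abs, ← sum_div]
        ring_nf

/-- Intermediate inequality in the generalized Hoeffding inequality: for
independent random variables `Xᵢ ∈ [aᵢ, bᵢ]` a.s., `S_N = Σᵢ Xᵢ`,
`0 < λ₁ < ⋯ < λₙ` and any `s > 0`,
`P(S_N − E(S_N) ≥ λ₁)
  + Σ_{k=2}^n (e^{s(λₖ−λ₁)} − e^{s(λₖ₋₁−λ₁)})·P(S_N − E(S_N) ≥ λₖ)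
  ≤ e^{−sλ₁ + (s²/8)·Σᵢ(bᵢ−aᵢ)²}`. -/
theorem generalized_hoeffding_aux
    {Ω : Type*} [MeasurableSpace Ω] (P : Measure Ω) [IsProbabilityMeasure P]
    {N : ℕ} {X : Fin N → Ω → ℝ} (hXmeas : ∀ i, Measurable (X i))
    (hindep : iIndepFun X P)
    {a b : Fin N → ℝ} (hab : ∀ i, a i < b i)
    (hbdd : ∀ i, ∀ᵐ ω ∂P, X i ω ∈ Set.Icc (a i) (b i))
    {n : ℕ} (hn : 1 ≤ n) {l : ℕ → ℝ}
    (hl1 : 0 < l 1)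
    (hlmono : ∀ k, 1 ≤ k → k < n → l k < l (k + 1))
    {s : ℝ} (hs : 0 < s) :
    (P {ω | l 1 ≤ (∑ i, X i ω) - ∫ x, (∑ i, X i x) ∂P}).toReal +
      ∑ k ∈ Finset.Icc 2 n,
        (Real.exp (s * (l k - l 1)) - Real.exp (s * (l (k - 1) - l 1))) *
          (P {ω | l k ≤ (∑ i, X i ω) - ∫ x, (∑ i, X i x) ∂P}).toReal ≤
    Real.exp (-s * l 1 + s ^ 2 / 8 * ∑ i, (b i - a i) ^ 2) :=
  generalized_hoeffding_aux_general P hXmeas hindep hbdd hs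
end

section
/- Let X₁, X₂, …, X_N be independent real-valued random variables on a probability space (Ω, 𝓕, ℙ) with aᵢ ≤ Xᵢ ≤ bᵢ almost surely for each i, where aᵢ < bᵢ, and let S_N = X₁ + X₂ + ⋯ + X_N. Let 0 < λ₁ < λ₂ < ⋯ < λₙ < ∞ and set s₀ = 4λ₁ / Σ_{i=1}^{N}(bᵢ − aᵢ)². Then ℙ(S_N − E(S_N) ≥ λ₁) + Σ_{k=2}^{n} [e^{s₀(λₖ − λ₁)} − e^{s₀(λₖ₋₁ − λ₁)}]·ℙ(S_N − E(S_N) ≥ λₖ) ≤ e^{−2λ₁² / Σ_{i=1}^{N}(bᵢ − aᵢ)²}. -/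
/-!
For `y ∈ ℝ` the weights on the left telescope: `1{λ₁ ≤ y} + Σₖ (e^{s₀(λₖ-λ₁)} - e^{s₀(λₖ₋₁-λ₁)}) 1{λₖ ≤ y}`
equals `e^{s₀(λⱼ-λ₁)}` for the largest `λⱼ ≤ y` (or `0`), hence is at most `e^{s₀(y-λ₁)}`.
Taking expectations at `y = S_N - E(S_N)` bounds the left side by `e^{-s₀λ₁} E e^{s₀(S_N - E S_N)}`,
which Hoeffding's lemma and independence bound by `exp(s₀² Σᵢ(bᵢ-aᵢ)²/8 - s₀λ₁)`.
-/

open MeasureTheory Finset ProbabilityTheory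

lemma indicator_add_sum_indicator_le_min {f : ℝ → ℝ} (hf : Monotone f) (hf0 : 0 ≤ f)
    {l : ℕ → ℝ} {n : ℕ} (hn : 1 ≤ n) (hl : ∀ k, 1 ≤ k → k < n → l k ≤ l (k + 1)) (y : ℝ) :
    {x | l 1 ≤ x}.indicator (fun _ ↦ f (l 1)) y +
        ∑ k ∈ Icc 2 n, {x | l k ≤ x}.indicator (fun _ ↦ f (l k) - f (l (k - 1))) y ≤
      f (min y (l n)) := by
  induction n, hn using Nat.le_induction with
  | base =>
    by_cases hy : l 1 ≤ y
    · simp [hy]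
    · simpa [hy] using hf0 _
  | succ m hm ih =>
    have ih := ih fun k hk hkm ↦ hl k hk (by omega)
    rw [sum_Icc_succ_top (by omega), ← add_assoc, Nat.add_sub_cancel]
    by_cases hy : l (m + 1) ≤ y
    · rw [Set.indicator_of_mem (show y ∈ {x | l (m + 1) ≤ x} from hy), min_eq_right hy]
      linarith [hf (min_le_right y (l m))]
    · rw [Set.indicator_of_notMem (show y ∉ {x | l (m + 1) ≤ x} from hy), add_zero]
      exact ih.trans (hf (min_le_min_left y (hl m hm (by omega))))

lemma indicator_add_sum_indicator_le {f : ℝ → ℝ} (hf : Monotone f) (hf0 : 0 ≤ f) {l : ℕ → ℝ}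
    {n : ℕ} (hl : ∀ k, 1 ≤ k → k < n → l k ≤ l (k + 1)) (y : ℝ) :
    {x | l 1 ≤ x}.indicator (fun _ ↦ f (l 1)) y +
        ∑ k ∈ Icc 2 n, {x | l k ≤ x}.indicator (fun _ ↦ f (l k) - f (l (k - 1))) y ≤
      f y := by
  rcases Nat.eq_zero_or_pos n with rfl | hn
  · have h := indicator_add_sum_indicator_le_min hf hf0 (l := l) le_rfl (by omega) y
    simp only [Icc_eq_empty_of_lt (by norm_num : 1 < 2), Icc_eq_empty_of_lt (by norm_num : 0 < 2),
      sum_empty] at h ⊢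
    exact h.trans (hf (min_le_left _ _))
  · exact (indicator_add_sum_indicator_le_min hf hf0 hn hl y).trans (hf (min_le_left _ _))

theorem add_sum_mul_measureReal_le_integral {Ω : Type*} [MeasurableSpace Ω] {μ : Measure Ω}
    [IsFiniteMeasure μ] {Y : Ω → ℝ} (hY : Measurable Y) {f : ℝ → ℝ} (hf : Monotone f)
    (hf0 : 0 ≤ f) (hfY : Integrable (fun ω ↦ f (Y ω)) μ) {l : ℕ → ℝ} {n : ℕ}
    (hl : ∀ k, 1 ≤ k → k < n → l k ≤ l (k + 1)) :
    f (l 1) * μ.real {ω | l 1 ≤ Y ω} +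
        ∑ k ∈ Icc 2 n, (f (l k) - f (l (k - 1))) * μ.real {ω | l k ≤ Y ω} ≤
      ∫ ω, f (Y ω) ∂μ := by
  have hmeas : ∀ t, MeasurableSet {ω | t ≤ Y ω} := fun t ↦ measurableSet_le measurable_const hY
  have hint : ∀ t (c : ℝ), Integrable ({ω | t ≤ Y ω}.indicator fun _ ↦ c) μ := fun t c ↦
    (integrable_const c).indicator (hmeas t)
  calc f (l 1) * μ.real {ω | l 1 ≤ Y ω} +
        ∑ k ∈ Icc 2 n, (f (l k) - f (l (k - 1))) * μ.real {ω | l k ≤ Y ω}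
      = ∫ ω, ({ω | l 1 ≤ Y ω}.indicator (fun _ ↦ f (l 1)) ω +
          ∑ k ∈ Icc 2 n, {ω | l k ≤ Y ω}.indicator (fun _ ↦ f (l k) - f (l (k - 1))) ω) ∂μ := by
        rw [integral_add (hint _ _) (integrable_finsetSum _ fun k _ ↦ hint _ _),
          integral_finsetSum _ fun k _ ↦ hint _ _]
        simp only [integral_indicator_const _ (hmeas _), smul_eq_mul, mul_comm]
    _ ≤ ∫ ω, f (Y ω) ∂μ :=
        integral_mono ((hint _ _).add (integrable_finsetSum _ fun k _ ↦ hint _ _)) hfY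
          fun ω ↦ indicator_add_sum_indicator_le hf hf0 hl (Y ω)

namespace ProbabilityTheory.HasSubgaussianMGF

variable {Ω : Type*} [MeasurableSpace Ω] {μ : Measure Ω} {X : Ω → ℝ} {c : NNReal}

lemma integrable_exp_mul_sub (h : HasSubgaussianMGF X c μ) (t ε : ℝ) :
    Integrable (fun ω ↦ Real.exp (t * (X ω - ε))) μ := by
  simp only [mul_sub, Real.exp_sub]
  exact (h.integrable_exp_mul t).div_const _

lemma integral_exp_mul_sub_le (h : HasSubgaussianMGF X c μ) (t ε : ℝ) :
    ∫ ω, Real.exp (t * (X ω - ε)) ∂μ ≤ Real.exp (c * t ^ 2 / 2 - t * ε) := by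
  simp only [mul_sub, Real.exp_sub]
  rw [integral_div]
  exact div_le_div_of_nonneg_right (h.mgf_le t) (Real.exp_pos _).le

end ProbabilityTheory.HasSubgaussianMGF

lemma hasSubgaussianMGF_sum_sub_integral_of_mem_Icc {Ω ι : Type*} [MeasurableSpace Ω]
    {μ : Measure Ω} [IsProbabilityMeasure μ] {X : ι → Ω → ℝ} (hX : ∀ i, AEMeasurable (X i) μ)
    (hindep : iIndepFun X μ) {a b : ι → ℝ} (hb : ∀ i, ∀ᵐ ω ∂μ, X i ω ∈ Set.Icc (a i) (b i))
    (s : Finset ι) :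
    HasSubgaussianMGF (fun ω ↦ ∑ i ∈ s, X i ω - μ[fun ω ↦ ∑ i ∈ s, X i ω])
      (∑ i ∈ s, (‖b i - a i‖₊ / 2) ^ 2) μ := by
  have h := HasSubgaussianMGF.sum_of_iIndepFun
    (hindep.comp (fun i (x : ℝ) ↦ x - ∫ ω, X i ω ∂μ) fun _ ↦ measurable_sub_const _) (s := s)
    fun i _ ↦ hasSubgaussianMGF_of_mem_Icc (hX i) (hb i)
  convert h using 2 with ω
  rw [integral_finsetSum _ fun i _ ↦ Integrable.of_mem_Icc _ _ (hX i) (hb i), ← sum_sub_distrib]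
  rfl

lemma coe_sum_nnnorm_sub_div_two_sq {ι : Type*} (s : Finset ι) (a b : ι → ℝ) :
    ((∑ i ∈ s, (‖b i - a i‖₊ / 2) ^ 2 : NNReal) : ℝ) = (∑ i ∈ s, (b i - a i) ^ 2) / 4 := by
  push_cast
  rw [sum_div]
  congr 1 with i
  rw [Real.norm_eq_abs, div_pow, sq_abs]
  norm_num

theorem generalized_hoeffding_general
    {Ω : Type*} [MeasurableSpace Ω] (P : Measure Ω) [IsProbabilityMeasure P]
    {N : ℕ} {X : Fin N → Ω → ℝ} (hXmeas : ∀ i, Measurable (X i))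
    (hindep : iIndepFun X P)
    {a b : Fin N → ℝ}
    (hbdd : ∀ i, ∀ᵐ ω ∂P, X i ω ∈ Set.Icc (a i) (b i))
    {n : ℕ} {l : ℕ → ℝ}
    (hl1 : 0 < l 1)
    (hlmono : ∀ k, 1 ≤ k → k < n → l k < l (k + 1))
    {s₀ : ℝ} (hs₀ : s₀ = 4 * l 1 / ∑ i, (b i - a i) ^ 2) :
    (P {ω | l 1 ≤ (∑ i, X i ω) - ∫ x, (∑ i, X i x) ∂P}).toReal +
      ∑ k ∈ Finset.Icc 2 n,
        (Real.exp (s₀ * (l k - l 1)) - Real.exp (s₀ * (l (k - 1) - l 1))) *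
          (P {ω | l k ≤ (∑ i, X i ω) - ∫ x, (∑ i, X i x) ∂P}).toReal ≤
    Real.exp (-2 * l 1 ^ 2 / ∑ i, (b i - a i) ^ 2) := by
  have hsubG := hasSubgaussianMGF_sum_sub_integral_of_mem_Icc
    (fun i ↦ (hXmeas i).aemeasurable) hindep hbdd univ
  have hs₀_nonneg : 0 ≤ s₀ := hs₀ ▸ by positivity
  have hmarkov := add_sum_mul_measureReal_le_integral
    ((measurable_sum _ fun i _ ↦ hXmeas i).sub_const (P[fun ω ↦ ∑ i, X i ω]))
    (f := fun y ↦ Real.exp (s₀ * (y - l 1)))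
    (fun x y hxy ↦ Real.exp_le_exp.2 (by gcongr)) (fun _ ↦ (Real.exp_pos _).le)
    (hsubG.integrable_exp_mul_sub s₀ (l 1)) fun k hk hkn ↦ (hlmono k hk hkn).le
  simp only [sub_self, mul_zero, Real.exp_zero, one_mul, measureReal_def] at hmarkov
  calc _ ≤ ∫ ω, Real.exp (s₀ * (∑ i, X i ω - P[fun ω ↦ ∑ i, X i ω] - l 1)) ∂P := hmarkov
    _ ≤ Real.exp ((∑ i, (‖b i - a i‖₊ / 2) ^ 2 : NNReal) * s₀ ^ 2 / 2 - s₀ * l 1) :=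
        hsubG.integral_exp_mul_sub_le s₀ (l 1)
    _ = Real.exp (-2 * l 1 ^ 2 / ∑ i, (b i - a i) ^ 2) := by
        -- `s₀` minimizes `s ↦ s² Σᵢ(bᵢ-aᵢ)² / 8 - s λ₁`.
        rw [coe_sum_nnnorm_sub_div_two_sq, hs₀]
        rcases eq_or_ne (∑ i, (b i - a i) ^ 2) 0 with hV | hV
        · simp [hV]
        · congr 1
          field_simp
          ring

/-- **Generalization of Hoeffding's inequality.** For independent random
variables `Xᵢ ∈ [aᵢ, bᵢ]` a.s., `S_N = Σᵢ Xᵢ`, `0 < λ₁ < ⋯ < λₙ` and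
`s₀ = 4λ₁ / Σᵢ(bᵢ−aᵢ)²`,
`P(S_N − E(S_N) ≥ λ₁)
  + Σ_{k=2}^n (e^{s₀(λₖ−λ₁)} − e^{s₀(λₖ₋₁−λ₁)})·P(S_N − E(S_N) ≥ λₖ)
  ≤ e^{−2λ₁² / Σᵢ(bᵢ−aᵢ)²}`. -/
theorem generalized_hoeffding
    {Ω : Type*} [MeasurableSpace Ω] (P : Measure Ω) [IsProbabilityMeasure P]
    {N : ℕ} {X : Fin N → Ω → ℝ} (hXmeas : ∀ i, Measurable (X i))
    (hindep : iIndepFun X P)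
    {a b : Fin N → ℝ} (hab : ∀ i, a i < b i)
    (hbdd : ∀ i, ∀ᵐ ω ∂P, X i ω ∈ Set.Icc (a i) (b i))
    {n : ℕ} (hn : 1 ≤ n) {l : ℕ → ℝ}
    (hl1 : 0 < l 1)
    (hlmono : ∀ k, 1 ≤ k → k < n → l k < l (k + 1))
    {s₀ : ℝ} (hs₀ : s₀ = 4 * l 1 / ∑ i, (b i - a i) ^ 2) :
    (P {ω | l 1 ≤ (∑ i, X i ω) - ∫ x, (∑ i, X i x) ∂P}).toReal +
      ∑ k ∈ Finset.Icc 2 n,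
        (Real.exp (s₀ * (l k - l 1)) - Real.exp (s₀ * (l (k - 1) - l 1))) *
          (P {ω | l k ≤ (∑ i, X i ω) - ∫ x, (∑ i, X i x) ∂P}).toReal ≤
    Real.exp (-2 * l 1 ^ 2 / ∑ i, (b i - a i) ^ 2) :=
  generalized_hoeffding_general P hXmeas hindep hbdd hl1 hlmono hs₀
end

section
/- Let X be a real-valued random variable on a probability space (Ω, 𝓕, ℙ) with finite expected value E(X) and finite variance σ² > 0, and let k > 1 be a real number. Then ℙ(|X − E(X)| ≥ kσ) ≤ (1/(k² − 1))·ℙ(|X − E(X)| < σ). -/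
/-!
With `Z = X - E X`, the pointwise bound `σ² 1{σ ≤ |Z|} + (k² - 1) σ² 1{kσ ≤ |Z|} ≤ Z²` integrates to
`σ² (1 - P(|Z| < σ)) + (k² - 1) σ² P(kσ ≤ |Z|) ≤ E Z² = σ²`, i.e.
`(k² - 1) P(kσ ≤ |Z|) ≤ P(|Z| < σ)`.
-/

open MeasureTheory ProbabilityTheory

section TwoLevel

variable {Ω : Type*} [MeasurableSpace Ω] {μ : Measure Ω} {Z : Ω → ℝ} {s t : ℝ}

theorem sq_mul_measureReal_add_le_integral_sq [IsFiniteMeasure μ] (hZ : Measurable Z)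
    (hZ2 : MemLp Z 2 μ) (hs : 0 ≤ s) (hst : s ≤ t) :
    s ^ 2 * μ.real {ω | s ≤ |Z ω|} + (t ^ 2 - s ^ 2) * μ.real {ω | t ≤ |Z ω|} ≤
      ∫ ω, Z ω ^ 2 ∂μ := by
  set A := {ω | s ≤ |Z ω|}
  set B := {ω | t ≤ |Z ω|}
  have hA : MeasurableSet A := measurableSet_le measurable_const hZ.abs
  have hB : MeasurableSet B := measurableSet_le measurable_const hZ.abs
  have hpointwise : ∀ ω, A.indicator (fun _ ↦ s ^ 2) ω + B.indicator (fun _ ↦ t ^ 2 - s ^ 2) ω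
      ≤ Z ω ^ 2 := by
    intro ω
    have hZ_sq : |Z ω| ^ 2 = Z ω ^ 2 := sq_abs _
    by_cases hωA : ω ∈ A <;> by_cases hωB : ω ∈ B <;>
      simp only [Set.indicator_of_mem, Set.indicator_of_notMem, hωA, hωB, not_false_eq_true] <;>
      simp only [A, B, Set.mem_ofPred_eq, not_le] at hωA hωB <;>
      nlinarith [abs_nonneg (Z ω)]
  calc s ^ 2 * μ.real A + (t ^ 2 - s ^ 2) * μ.real B
      = ∫ ω, A.indicator (fun _ ↦ s ^ 2) ω + B.indicator (fun _ ↦ t ^ 2 - s ^ 2) ω ∂μ := by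
        rw [integral_add ((integrable_const _).indicator hA) ((integrable_const _).indicator hB),
          integral_indicator_const _ hA, integral_indicator_const _ hB, smul_eq_mul, smul_eq_mul,
          mul_comm, mul_comm (μ.real B)]
    _ ≤ ∫ ω, Z ω ^ 2 ∂μ :=
        integral_mono (((integrable_const _).indicator hA).add ((integrable_const _).indicator hB))
          hZ2.integrable_sq hpointwise

theorem sq_sub_sq_mul_measureReal_le_of_integral_sq_le [IsProbabilityMeasure μ]
    (hZ : Measurable Z) (hZ2 : MemLp Z 2 μ) (hs : 0 ≤ s) (hst : s ≤ t)
    (hZs : ∫ ω, Z ω ^ 2 ∂μ ≤ s ^ 2) :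
    (t ^ 2 - s ^ 2) * μ.real {ω | t ≤ |Z ω|} ≤ s ^ 2 * μ.real {ω | |Z ω| < s} := by
  have hcompl : {ω | s ≤ |Z ω|} = {ω | |Z ω| < s}ᶜ := by ext; simp
  have hmeas : MeasurableSet {ω | |Z ω| < s} := measurableSet_lt hZ.abs measurable_const
  have h := sq_mul_measureReal_add_le_integral_sq hZ hZ2 hs hst
  rw [hcompl, probReal_compl_eq_one_sub hmeas] at h
  linarith

end TwoLevel

/-- For a random variable `X` with finite positive variance `σ²` (standard
deviation `σ > 0`) and `k > 1`,
`P(|X − E(X)| ≥ kσ) ≤ (1/(k² − 1))·P(|X − E(X)| < σ)`. -/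
theorem chebyshev_two_level
    {Ω : Type*} [MeasurableSpace Ω] (P : Measure Ω) [IsProbabilityMeasure P]
    {X : Ω → ℝ} (hX : Measurable X) (hX2 : MemLp X 2 P)
    (hvar : 0 < variance X P)
    {k : ℝ} (hk : 1 < k) :
    (P {ω | k * Real.sqrt (variance X P) ≤ |X ω - ∫ x, X x ∂P|}).toReal ≤
      1 / (k ^ 2 - 1) *
        (P {ω | |X ω - ∫ x, X x ∂P| < Real.sqrt (variance X P)}).toReal := by
  set σ := Real.sqrt (variance X P)
  have hσ : 0 < σ := Real.sqrt_pos.2 hvar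
  have hσ_sq : ∫ ω, (X ω - ∫ x, X x ∂P) ^ 2 ∂P = σ ^ 2 := by
    rw [Real.sq_sqrt hvar.le, variance_eq_integral hX.aemeasurable]
  have h := sq_sub_sq_mul_measureReal_le_of_integral_sq_le (hX.sub_const _)
    (hX2.sub (memLp_const _)) hσ.le (le_mul_of_one_le_left hσ.le hk.le) hσ_sq.le
  rw [mul_pow, ← sub_one_mul, mul_comm _ (σ ^ 2), mul_assoc] at h
  have hk_sq : 0 < k ^ 2 - 1 := by nlinarith
  rw [← measureReal_def, ← measureReal_def, one_div_mul_eq_div, le_div_iff₀ hk_sq, mul_comm]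
  exact le_of_mul_le_mul_left h (by positivity)
end

section
/- Let X be a real-valued random variable on a probability space (Ω, 𝓕, ℙ) with finite expected value E(X) and finite variance σ² > 0, and let 0 < λ₁ < λ₂. Then ℙ(X − E(X) ≥ λ₁) + [((λ₁λ₂ + σ²)² − (λ₁² + σ²)²)/(λ₁² + σ²)²]·ℙ(X − E(X) ≥ λ₂) ≤ σ²/(σ² + λ₁²). -/
/-!
Write `Y = X - E X`. For every shift `a ≥ -λ₁` the function `y ↦ (y + a)²` is nonnegative and
increasing on `[λ₁, ∞)`, so it dominates the staircase
`(λ₁ + a)² 𝟙[λ₁ ≤ y] + ((λ₂ + a)² - (λ₁ + a)²) 𝟙[λ₂ ≤ y]`. Integrating against the law of `Y`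
and using `E (Y + a)² = σ² + a²` gives a two-level Markov bound; the shift `a = σ² / λ₁`, the
optimal one in the classical Cantelli inequality, turns it into the stated inequality.
-/

open MeasureTheory ProbabilityTheory Set

lemma indicator_add_indicator_le_of_monotoneOn {f : ℝ → ℝ} {l₁ l₂ : ℝ} (hl : l₁ ≤ l₂)
    (hf_nonneg : ∀ y, 0 ≤ f y) (hf_mono : MonotoneOn f (Ici l₁)) (y : ℝ) :
    (Ici l₁).indicator (fun _ ↦ f l₁) y + (Ici l₂).indicator (fun _ ↦ f l₂ - f l₁) y ≤ f y := by
  simp only [indicator_apply, mem_Ici]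
  split_ifs with h₁ h₂ h₂
  · linarith [hf_mono (mem_Ici.2 hl) (mem_Ici.2 h₁) h₂]
  · simpa using hf_mono self_mem_Ici (mem_Ici.2 h₁) h₁
  · exact absurd (hl.trans h₂) h₁
  · simpa using hf_nonneg y

section

variable {Ω : Type*} [MeasurableSpace Ω] {μ : Measure Ω}

theorem mul_meas_ge_add_mul_meas_ge_le_integral_comp [IsFiniteMeasure μ] {Y : Ω → ℝ}
    (hY : AEMeasurable Y μ) {f : ℝ → ℝ} {l₁ l₂ : ℝ} (hl : l₁ ≤ l₂)
    (hf_nonneg : ∀ y, 0 ≤ f y) (hf_mono : MonotoneOn f (Ici l₁))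
    (hf_int : Integrable (fun ω ↦ f (Y ω)) μ) :
    f l₁ * μ.real {ω | l₁ ≤ Y ω} + (f l₂ - f l₁) * μ.real {ω | l₂ ≤ Y ω} ≤
      ∫ ω, f (Y ω) ∂μ := by
  have hmeas (l : ℝ) : NullMeasurableSet {ω | l ≤ Y ω} μ :=
    hY.nullMeasurable measurableSet_Ici
  have hint (l c : ℝ) : Integrable ({ω | l ≤ Y ω}.indicator fun _ ↦ c) μ :=
    (integrable_const c).indicator₀ (hmeas l)
  have integral_indicator (l c : ℝ) :
      ∫ ω, {ω | l ≤ Y ω}.indicator (fun _ ↦ c) ω ∂μ = c * μ.real {ω | l ≤ Y ω} := by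
    rw [integral_indicator₀ (hmeas l), setIntegral_const, smul_eq_mul, mul_comm]
  rw [← integral_indicator, ← integral_indicator, ← integral_add (hint _ _) (hint _ _)]
  exact integral_mono ((hint _ _).add (hint _ _)) hf_int fun ω ↦
    indicator_add_indicator_le_of_monotoneOn hl hf_nonneg hf_mono (Y ω)

variable [IsProbabilityMeasure μ] {X : Ω → ℝ}

theorem integral_sub_integral_add_sq (hX : MemLp X 2 μ) (a : ℝ) :
    ∫ ω, (X ω - μ[X] + a) ^ 2 ∂μ = Var[X; μ] + a ^ 2 := by
  have hY : MemLp (fun ω ↦ X ω - μ[X]) 2 μ := hX.sub (memLp_const _)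
  have hZ : MemLp (fun ω ↦ X ω - μ[X] + a) 2 μ := hY.add (memLp_const a)
  have hmean : ∫ ω, (X ω - μ[X] + a) ∂μ = a := by
    rw [integral_add (hY.integrable one_le_two) (integrable_const a),
      integral_sub (hX.integrable one_le_two) (integrable_const _)]
    simp
  have hvar : Var[fun ω ↦ X ω - μ[X] + a; μ] = Var[X; μ] := by
    rw [variance_add_const hY.1, variance_sub_const hX.1]
  rw [← hvar, variance_eq_sub hZ, hmean]
  simp [Pi.pow_apply]

theorem cantelli_two_level_shifted (hX : MemLp X 2 μ) {l₁ l₂ a : ℝ} (hl₁a : 0 ≤ l₁ + a)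
    (hl : l₁ ≤ l₂) :
    (l₁ + a) ^ 2 * μ.real {ω | l₁ ≤ X ω - μ[X]} +
        ((l₂ + a) ^ 2 - (l₁ + a) ^ 2) * μ.real {ω | l₂ ≤ X ω - μ[X]} ≤
      Var[X; μ] + a ^ 2 := by
  have hZ : MemLp (fun ω ↦ X ω - μ[X] + a) 2 μ := (hX.sub (memLp_const _)).add (memLp_const a)
  have hmono : MonotoneOn (fun y : ℝ ↦ (y + a) ^ 2) (Ici l₁) := fun y hy _ _ hyz ↦
    pow_le_pow_left₀ (by linarith [mem_Ici.1 hy]) (by linarith) 2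
  rw [← integral_sub_integral_add_sq hX a]
  exact mul_meas_ge_add_mul_meas_ge_le_integral_comp (f := fun y ↦ (y + a) ^ 2)
    (hX.aemeasurable.sub_const _) hl (fun _ ↦ sq_nonneg _) hmono hZ.integrable_sq

end

theorem cantelli_two_level_general
    {Ω : Type*} [MeasurableSpace Ω] (P : Measure Ω) [IsProbabilityMeasure P]
    {X : Ω → ℝ} (hX2 : MemLp X 2 P)
    {l₁ l₂ : ℝ} (hl₁ : 0 < l₁) (hl₁₂ : l₁ < l₂) :
    (P {ω | l₁ ≤ X ω - ∫ x, X x ∂P}).toReal +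
      ((l₁ * l₂ + variance X P) ^ 2 - (l₁ ^ 2 + variance X P) ^ 2) /
          (l₁ ^ 2 + variance X P) ^ 2 *
        (P {ω | l₂ ≤ X ω - ∫ x, X x ∂P}).toReal ≤
      variance X P / (variance X P + l₁ ^ 2) := by
  have hvar : 0 ≤ variance X P := variance_nonneg X P
  have key := cantelli_two_level_shifted hX2 (a := variance X P / l₁) (by positivity) hl₁₂.le
  rw [measureReal_def, measureReal_def] at key
  have hl₁0 : l₁ ≠ 0 := hl₁.ne'
  rw [add_comm (variance X P)]
  field_simp at key ⊢
  linarith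

/-- The `n = 2` instance of the generalized Cantelli inequality: for a random
variable `X` with finite positive variance `σ²` and `0 < λ₁ < λ₂`,
`P(X − E(X) ≥ λ₁)
  + ((λ₁λ₂ + σ²)² − (λ₁² + σ²)²)/(λ₁² + σ²)² · P(X − E(X) ≥ λ₂)
  ≤ σ²/(σ² + λ₁²)`. -/
theorem cantelli_two_level
    {Ω : Type*} [MeasurableSpace Ω] (P : Measure Ω) [IsProbabilityMeasure P]
    {X : Ω → ℝ} (hX : Measurable X) (hX2 : MemLp X 2 P)
    (hvar : 0 < variance X P)
    {l₁ l₂ : ℝ} (hl₁ : 0 < l₁) (hl₁₂ : l₁ < l₂) :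
    (P {ω | l₁ ≤ X ω - ∫ x, X x ∂P}).toReal +
      ((l₁ * l₂ + variance X P) ^ 2 - (l₁ ^ 2 + variance X P) ^ 2) /
          (l₁ ^ 2 + variance X P) ^ 2 *
        (P {ω | l₂ ≤ X ω - ∫ x, X x ∂P}).toReal ≤
      variance X P / (variance X P + l₁ ^ 2) :=
  cantelli_two_level_general P hX2 hl₁ hl₁₂
end
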